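/- Weak compositionality, forward direction: for nets N : k→l and M : l→m, if the composite N;M has a weak transition (X ⊎ Y) ==α/β==> (X' ⊎ Y'), then there exist p, q ∈ ℕ and labels γ, γ₁,…,γ_p, γ'₁,…,γ'_q ∈ {0,1}^l such that N has a trace X --0^k/γ₁--> ⋯ --0^k/γ_p--> · --α/γ--> · --0^k/γ'₁--> ⋯ --0^k/γ'_q--> X' and M has a trace Y --γ₁/0^m--> ⋯ --γ_p/0^m--> · --γ/β--> · --γ'₁/0^m--> ⋯ --γ'_q/0^m--> Y'. -/
import Mathlib


/-- A net with boundaries `N : k → l` with places `P` and transitions `T`. -/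
structure Net (P : Type) (T : Type) (k l : ℕ) where
  pre : T → Set P
  post : T → Set P
  src : T → Set (Fin k)
  tgt : T → Set (Fin l)

namespace Net

variable {P Q R : Type} {T₁ T₂ T₃ : Type} {k l m n : ℕ}

/-- Distinct transitions have disjoint boundary connections. -/
def BoundaryInj (N : Net P T₁ k l) : Prop :=
  ∀ t t' : T₁, t ≠ t' → N.src t ∩ N.src t' = ∅ ∧ N.tgt t ∩ N.tgt t' = ∅

def preSet (N : Net P T₁ k l) (U : Set T₁) : Set P := ⋃ t ∈ U, N.pre t
def postSet (N : Net P T₁ k l) (U : Set T₁) : Set P := ⋃ t ∈ U, N.post t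
def srcSet (N : Net P T₁ k l) (U : Set T₁) : Set (Fin k) := ⋃ t ∈ U, N.src t
def tgtSet (N : Net P T₁ k l) (U : Set T₁) : Set (Fin l) := ⋃ t ∈ U, N.tgt t

/-- Mutual independence of a set of transitions. -/
def MI (N : Net P T₁ k l) (U : Set T₁) : Prop :=
  ∀ t ∈ U, ∀ t' ∈ U, t ≠ t' →
    (N.pre t ∪ N.post t) ∩ (N.pre t' ∪ N.post t') = ∅

/-- The (1-bounded) step transition relation on markings. -/
def Step (N : Net P T₁ k l) (X : Set P) (α : Set (Fin k)) (β : Set (Fin l))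
    (X' : Set P) : Prop :=
  ∃ U : Set T₁, N.MI U ∧ N.preSet U ⊆ X ∧ N.postSet U ∩ X = ∅ ∧
    X' = (X \ N.preSet U) ∪ N.postSet U ∧ N.srcSet U = α ∧ N.tgtSet U = β

/-- A synchronisation between `N : k → l` and `M : l → m`. -/
def Sync (N : Net P T₁ k l) (M : Net Q T₂ l m) (U : Set T₁) (V : Set T₂) : Prop :=
  N.MI U ∧ M.MI V ∧ N.tgtSet U = M.srcSet V

/-- A minimal synchronisation: non-trivial, and any synchronisation below it is
trivial (or the synchronisation itself). -/
def MinSync (N : Net P T₁ k l) (M : Net Q T₂ l m) (U : Set T₁) (V : Set T₂) : Prop :=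
  Sync N M U V ∧ ¬(U = ∅ ∧ V = ∅) ∧
    ∀ U' V', U' ⊆ U → V' ⊆ V → Sync N M U' V' →
      (U' = ∅ ∧ V' = ∅) ∨ (U' = U ∧ V' = V)

/-- Independence of two synchronisations: unions componentwise MI, and disjoint. -/
def IndepSync (N : Net P T₁ k l) (M : Net Q T₂ l m)
    (s s' : Set T₁ × Set T₂) : Prop :=
  N.MI (s.1 ∪ s'.1) ∧ M.MI (s.2 ∪ s'.2) ∧ s.1 ∩ s'.1 = ∅ ∧ s.2 ∩ s'.2 = ∅

/-- Composition `N ; M` of nets along a common boundary. -/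
def comp (N : Net P T₁ k l) (M : Net Q T₂ l m) :
    Net (P ⊕ Q) {s : Set T₁ × Set T₂ // MinSync N M s.1 s.2} k m where
  pre s := Sum.inl '' N.preSet s.1.1 ∪ Sum.inr '' M.preSet s.1.2
  post s := Sum.inl '' N.postSet s.1.1 ∪ Sum.inr '' M.postSet s.1.2
  src s := N.srcSet s.1.1
  tgt s := M.tgtSet s.1.2

/-- Tensor (parallel composition) of nets. -/
def tensor (M : Net P T₁ k l) (N : Net Q T₂ m n) :
    Net (P ⊕ Q) (T₁ ⊕ T₂) (k + m) (l + n) where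
  pre := Sum.elim (fun t => Sum.inl '' M.pre t) (fun t => Sum.inr '' N.pre t)
  post := Sum.elim (fun t => Sum.inl '' M.post t) (fun t => Sum.inr '' N.post t)
  src := Sum.elim (fun t => Fin.castAdd m '' M.src t) (fun t => Fin.natAdd k '' N.src t)
  tgt := Sum.elim (fun t => Fin.castAdd n '' M.tgt t) (fun t => Fin.natAdd l '' N.tgt t)

/-- Disjoint union of markings. -/
def mU (X : Set P) (Y : Set Q) : Set (P ⊕ Q) := Sum.inl '' X ∪ Sum.inr '' Y

/-- Traces: sequences of consecutive step transitions, recorded by their labels. -/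
def Trace (N : Net P T₁ k l) :
    Set P → List (Set (Fin k) × Set (Fin l)) → Set P → Prop
  | X, [], X' => X = X'
  | X, ab :: w, X' => ∃ X'', N.Step X ab.1 ab.2 X'' ∧ N.Trace X'' w X'

/-- Epsilon (internal) steps. -/
def EpsStep (N : Net P T₁ k l) (X X' : Set P) : Prop := N.Step X ∅ ∅ X'

/-- The weak transition relation. -/
def Weak (N : Net P T₁ k l) (X : Set P) (α : Set (Fin k)) (β : Set (Fin l))
    (X' : Set P) : Prop :=
  ∃ X'' X''', Relation.ReflTransGen N.EpsStep X X'' ∧ N.Step X'' α β X''' ∧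
    Relation.ReflTransGen N.EpsStep X''' X'

end Net

/-- An NFA with boundaries `A : k → l`: alphabet `{0,1}^k × {0,1}^l`. -/
structure BNFA (S : Type) (k l : ℕ) where
  step : S → Set (Fin k) × Set (Fin l) → S → Prop
  start : Set S
  accept : Set S

namespace BNFA

variable {S S' S'' : Type} {k l m n : ℕ}

def Run (A : BNFA S k l) : S → List (Set (Fin k) × Set (Fin l)) → S → Prop
  | s, [], s' => s = s'
  | s, a :: w, s' => ∃ s₁, A.step s a s₁ ∧ A.Run s₁ w s'

def Lang (A : BNFA S k l) : Set (List (Set (Fin k) × Set (Fin l))) :=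
  {w | ∃ s ∈ A.start, ∃ s' ∈ A.accept, A.Run s w s'}

/-- Sequential composition of NFAs with boundaries (synchronising product). -/
def comp (A : BNFA S k l) (B : BNFA S' l m) : BNFA (S × S') k m where
  step p a q := ∃ γ, A.step p.1 (a.1, γ) q.1 ∧ B.step p.2 (γ, a.2) q.2
  start := {p | p.1 ∈ A.start ∧ p.2 ∈ B.start}
  accept := {p | p.1 ∈ A.accept ∧ p.2 ∈ B.accept}

/-- Tensor of NFAs with boundaries. -/
def tensor (A : BNFA S k l) (B : BNFA S' m n) : BNFA (S × S') (k + m) (l + n) where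
  step p a q :=
    A.step p.1 (Fin.castAdd m ⁻¹' a.1, Fin.castAdd n ⁻¹' a.2) q.1 ∧
    B.step p.2 (Fin.natAdd k ⁻¹' a.1, Fin.natAdd l ⁻¹' a.2) q.2
  start := {p | p.1 ∈ A.start ∧ p.2 ∈ B.start}
  accept := {p | p.1 ∈ A.accept ∧ p.2 ∈ B.accept}

/-- Isomorphism of NFAs with boundaries. -/
def Iso (A : BNFA S k l) (B : BNFA S' k l) : Prop :=
  ∃ e : S ≃ S', (∀ s a s', A.step s a s' ↔ B.step (e s) a (e s')) ∧
    (∀ s, s ∈ A.start ↔ e s ∈ B.start) ∧ (∀ s, s ∈ A.accept ↔ e s ∈ B.accept)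

/-- Epsilon transitions of an NFA with boundaries. -/
def EpsA (A : BNFA S k l) (s s' : S) : Prop := A.step s (∅, ∅) s'

/-- Epsilon closure of an NFA with boundaries. -/
def epsClose (A : BNFA S k l) : BNFA S k l where
  step s a s' := ∃ s₁ s₂, Relation.ReflTransGen A.EpsA s s₁ ∧ A.step s₁ a s₂ ∧
    Relation.ReflTransGen A.EpsA s₂ s'
  start := A.start
  accept := A.accept

end BNFA

/-- The step-semantics NFA of a net with boundaries, with given initial and
final sets of markings. -/
def netNFA {P T : Type} {k l : ℕ} (N : Net P T k l)
    (I F : Set (Set P)) : BNFA (Set P) k l where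
  step X a X' := N.Step X a.1 a.2 X'
  start := I
  accept := F

/-- A bundled NFA with boundaries. -/
structure BBNFA (k l : ℕ) where
  S : Type
  nfa : BNFA S k l


section Aux
open Net

variable {P Q T₁ T₂ : Type} {k l m : ℕ}

lemma mU_inj {X X' : Set P} {Y Y' : Set Q} (h : Net.mU X Y = Net.mU X' Y') :
    X = X' ∧ Y = Y' := by
  constructor <;> ext a
  · have := Set.ext_iff.mp h (Sum.inl a); simpa [Net.mU] using this
  · have := Set.ext_iff.mp h (Sum.inr a); simpa [Net.mU] using this

lemma trace_append {N : Net P T₁ k l} {X X'' X' : Set P}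
    {w₁ w₂ : List (Set (Fin k) × Set (Fin l))}
    (h1 : N.Trace X w₁ X'') (h2 : N.Trace X'' w₂ X') :
    N.Trace X (w₁ ++ w₂) X' := by
  induction w₁ generalizing X with
  | nil => cases h1; simpa using h2
  | cons ab w ih =>
    obtain ⟨X₁, hs, ht⟩ := h1
    exact ⟨X₁, hs, ih ht⟩

lemma step_decomp (N : Net P T₁ k l) (M : Net Q T₂ l m)
    {X : Set P} {Y : Set Q} {α : Set (Fin k)} {β : Set (Fin m)} {Z : Set (P ⊕ Q)}
    (h : (N.comp M).Step (Net.mU X Y) α β Z) :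
    ∃ γ X' Y', Z = Net.mU X' Y' ∧ N.Step X α γ X' ∧ M.Step Y γ β Y' := by
  obtain ⟨W, hMI, hpre, hpost, hZ, hsrc, htgt⟩ := h
  classical
  set U : Set T₁ := ⋃ s ∈ W, (s : {s : Set T₁ × Set T₂ // MinSync N M s.1 s.2}).1.1 with hU
  set V : Set T₂ := ⋃ s ∈ W, (s : {s : Set T₁ × Set T₂ // MinSync N M s.1 s.2}).1.2 with hV
  -- basic unfolding identities
  have hpreU : N.preSet U = ⋃ s ∈ W, N.preSet (s : {s : Set T₁ × Set T₂ // MinSync N M s.1 s.2}).1.1 := by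
    ext p; simp only [Net.preSet, hU, Set.mem_iUnion, exists_prop]; tauto
  have hpostU : N.postSet U = ⋃ s ∈ W, N.postSet (s : {s : Set T₁ × Set T₂ // MinSync N M s.1 s.2}).1.1 := by
    ext p; simp only [Net.postSet, hU, Set.mem_iUnion, exists_prop]; tauto
  have hsrcU : N.srcSet U = ⋃ s ∈ W, N.srcSet (s : {s : Set T₁ × Set T₂ // MinSync N M s.1 s.2}).1.1 := by
    ext p; simp only [Net.srcSet, hU, Set.mem_iUnion, exists_prop]; tauto
  have htgtU : N.tgtSet U = ⋃ s ∈ W, N.tgtSet (s : {s : Set T₁ × Set T₂ // MinSync N M s.1 s.2}).1.1 := by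
    ext p; simp only [Net.tgtSet, hU, Set.mem_iUnion, exists_prop]; tauto
  have hpreV : M.preSet V = ⋃ s ∈ W, M.preSet (s : {s : Set T₁ × Set T₂ // MinSync N M s.1 s.2}).1.2 := by
    ext p; simp only [Net.preSet, hV, Set.mem_iUnion, exists_prop]; tauto
  have hpostV : M.postSet V = ⋃ s ∈ W, M.postSet (s : {s : Set T₁ × Set T₂ // MinSync N M s.1 s.2}).1.2 := by
    ext p; simp only [Net.postSet, hV, Set.mem_iUnion, exists_prop]; tauto
  have hsrcV : M.srcSet V = ⋃ s ∈ W, M.srcSet (s : {s : Set T₁ × Set T₂ // MinSync N M s.1 s.2}).1.2 := by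
    ext p; simp only [Net.srcSet, hV, Set.mem_iUnion, exists_prop]; tauto
  have htgtV : M.tgtSet V = ⋃ s ∈ W, M.tgtSet (s : {s : Set T₁ × Set T₂ // MinSync N M s.1 s.2}).1.2 := by
    ext p; simp only [Net.tgtSet, hV, Set.mem_iUnion, exists_prop]; tauto
  have hcpre : (N.comp M).preSet W = Sum.inl '' N.preSet U ∪ Sum.inr '' M.preSet V := by
    rw [hpreU, hpreV, Set.image_iUnion₂, Set.image_iUnion₂]
    simp only [Net.preSet, Net.comp, Set.iUnion_union_distrib]
  have hcpost : (N.comp M).postSet W = Sum.inl '' N.postSet U ∪ Sum.inr '' M.postSet V := by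
    rw [hpostU, hpostV, Set.image_iUnion₂, Set.image_iUnion₂]
    simp only [Net.postSet, Net.comp, Set.iUnion_union_distrib]
  have hcsrc : (N.comp M).srcSet W = N.srcSet U := by
    rw [hsrcU]; ext x; simp [Net.srcSet, Net.comp]
  have hctgt : (N.comp M).tgtSet W = M.tgtSet V := by
    rw [htgtV]; ext x; simp [Net.tgtSet, Net.comp]
  have hgamma : N.tgtSet U = M.srcSet V := by
    rw [htgtU, hsrcV]
    apply Set.iUnion₂_congr
    intro s hs
    exact s.2.1.2.2
  -- MI for U and V
  have hMIU : N.MI U := by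
    intro t ht t' ht' hne
    simp only [hU, Set.mem_iUnion] at ht ht'
    obtain ⟨s, hs, hts⟩ := ht
    obtain ⟨s', hs', hts'⟩ := ht'
    by_cases hss : s = s'
    · subst hss; exact s.2.1.1 t hts t' hts' hne
    · have hd := hMI s hs s' hs' hss
      ext p; simp only [Set.mem_inter_iff, Set.mem_union, Set.mem_empty_iff_false, iff_false]
      rintro ⟨hp1, hp2⟩
      have h1 : Sum.inl p ∈ ((N.comp M).pre s ∪ (N.comp M).post s) := by
        simp only [Net.comp, Set.mem_union, Set.mem_image]
        rcases hp1 with hp | hp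
        · exact Or.inl (Or.inl ⟨p, Set.mem_biUnion hts hp, rfl⟩)
        · exact Or.inr (Or.inl ⟨p, Set.mem_biUnion hts hp, rfl⟩)
      have h2 : Sum.inl p ∈ ((N.comp M).pre s' ∪ (N.comp M).post s') := by
        simp only [Net.comp, Set.mem_union, Set.mem_image]
        rcases hp2 with hp | hp
        · exact Or.inl (Or.inl ⟨p, Set.mem_biUnion hts' hp, rfl⟩)
        · exact Or.inr (Or.inl ⟨p, Set.mem_biUnion hts' hp, rfl⟩)
      have : Sum.inl p ∈ (((N.comp M).pre s ∪ (N.comp M).post s) ∩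
          ((N.comp M).pre s' ∪ (N.comp M).post s')) := ⟨h1, h2⟩
      rw [hd] at this
      exact this
  have hMIV : M.MI V := by
    intro t ht t' ht' hne
    simp only [hV, Set.mem_iUnion] at ht ht'
    obtain ⟨s, hs, hts⟩ := ht
    obtain ⟨s', hs', hts'⟩ := ht'
    by_cases hss : s = s'
    · subst hss; exact s.2.1.2.1 t hts t' hts' hne
    · have hd := hMI s hs s' hs' hss
      ext p; simp only [Set.mem_inter_iff, Set.mem_union, Set.mem_empty_iff_false, iff_false]
      rintro ⟨hp1, hp2⟩
      have h1 : Sum.inr p ∈ ((N.comp M).pre s ∪ (N.comp M).post s) := by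
        simp only [Net.comp, Set.mem_union, Set.mem_image]
        rcases hp1 with hp | hp
        · exact Or.inl (Or.inr ⟨p, Set.mem_biUnion hts hp, rfl⟩)
        · exact Or.inr (Or.inr ⟨p, Set.mem_biUnion hts hp, rfl⟩)
      have h2 : Sum.inr p ∈ ((N.comp M).pre s' ∪ (N.comp M).post s') := by
        simp only [Net.comp, Set.mem_union, Set.mem_image]
        rcases hp2 with hp | hp
        · exact Or.inl (Or.inr ⟨p, Set.mem_biUnion hts' hp, rfl⟩)
        · exact Or.inr (Or.inr ⟨p, Set.mem_biUnion hts' hp, rfl⟩)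
      have : Sum.inr p ∈ (((N.comp M).pre s ∪ (N.comp M).post s) ∩
          ((N.comp M).pre s' ∪ (N.comp M).post s')) := ⟨h1, h2⟩
      rw [hd] at this
      exact this
  rw [hcpre] at hpre
  rw [hcpost] at hpost
  rw [hcpre, hcpost] at hZ
  rw [hcsrc] at hsrc
  rw [hctgt] at htgt
  refine ⟨N.tgtSet U, (X \ N.preSet U) ∪ N.postSet U, (Y \ M.preSet V) ∪ M.postSet V, ?_, ?_, ?_⟩
  · rw [hZ]; ext x
    cases x with
    | inl p =>
      simp [Net.mU, Set.mem_diff]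
    | inr q =>
      simp [Net.mU, Set.mem_diff]
  · refine ⟨U, hMIU, ?_, ?_, rfl, hsrc, rfl⟩
    · intro p hp
      have := hpre (Or.inl ⟨p, hp, rfl⟩)
      simpa [Net.mU] using this
    · ext p
      simp only [Set.mem_inter_iff, Set.mem_empty_iff_false, iff_false]
      rintro ⟨hp1, hp2⟩
      have : Sum.inl p ∈ (Sum.inl '' N.postSet U ∪ Sum.inr '' M.postSet V) ∩ Net.mU X Y :=
        ⟨Or.inl ⟨p, hp1, rfl⟩, Or.inl ⟨p, hp2, rfl⟩⟩
      rw [hpost] at this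
      exact this
  · refine ⟨V, hMIV, ?_, ?_, rfl, hgamma.symm, htgt⟩
    · intro q hq
      have := hpre (Or.inr ⟨q, hq, rfl⟩)
      simpa [Net.mU] using this
    · ext q
      simp only [Set.mem_inter_iff, Set.mem_empty_iff_false, iff_false]
      rintro ⟨hq1, hq2⟩
      have : Sum.inr q ∈ (Sum.inl '' N.postSet U ∪ Sum.inr '' M.postSet V) ∩ Net.mU X Y :=
        ⟨Or.inr ⟨q, hq1, rfl⟩, Or.inr ⟨q, hq2, rfl⟩⟩
      rw [hpost] at this
      exact this

lemma eps_decomp (N : Net P T₁ k l) (M : Net Q T₂ l m)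
    {Z Z' : Set (P ⊕ Q)}
    (h : Relation.ReflTransGen (N.comp M).EpsStep Z Z') :
    ∀ X Y, Z = Net.mU X Y → ∃ (γs : List (Set (Fin l))) (X' : Set P) (Y' : Set Q),
      Z' = Net.mU X' Y' ∧
      N.Trace X (γs.map fun g => ((∅ : Set (Fin k)), g)) X' ∧
      M.Trace Y (γs.map fun g => (g, (∅ : Set (Fin m)))) Y' := by
  induction h using Relation.ReflTransGen.head_induction_on with
  | refl => exact fun X Y hXY => ⟨[], X, Y, hXY, rfl, rfl⟩
  | head hstep _ ih =>
    rintro X Y rfl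
    obtain ⟨γ, X₁, Y₁, hZ₁, hN1, hM1⟩ := step_decomp N M hstep
    obtain ⟨γs, X', Y', hZ', hNt, hMt⟩ := ih X₁ Y₁ hZ₁
    exact ⟨γ :: γs, X', Y', hZ', ⟨X₁, hN1, hNt⟩, ⟨Y₁, hM1, hMt⟩⟩

end Aux

open Net in
/-- weak compositionality, forward direction. -/
theorem weak_compositionality_forward {P Q T₁ T₂ : Type} {k l m : ℕ}
    (N : Net P T₁ k l) (M : Net Q T₂ l m)
    (hN : N.BoundaryInj) (hM : M.BoundaryInj)
    (X X' : Set P) (Y Y' : Set Q) (α : Set (Fin k)) (β : Set (Fin m))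
    (h : (N.comp M).Weak (mU X Y) α β (mU X' Y')) :
    ∃ (γs γs' : List (Set (Fin l))) (γ : Set (Fin l)),
      N.Trace X
        ((γs.map fun g => ((∅ : Set (Fin k)), g)) ++ [(α, γ)] ++
          (γs'.map fun g => ((∅ : Set (Fin k)), g))) X' ∧
      M.Trace Y
        ((γs.map fun g => (g, (∅ : Set (Fin m)))) ++ [(γ, β)] ++
          (γs'.map fun g => (g, (∅ : Set (Fin m))))) Y' := by

  obtain ⟨Z₁, Z₂, h1, h2, h3⟩ := h
  obtain ⟨γs, X₁, Y₁, hZ₁, hNt1, hMt1⟩ := eps_decomp N M h1 X Y rfl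
  subst hZ₁
  obtain ⟨γ, X₂, Y₂, hZ₂, hN2, hM2⟩ := step_decomp N M h2
  obtain ⟨γs', X₃, Y₃, hZ₃, hNt3, hMt3⟩ := eps_decomp N M h3 X₂ Y₂ hZ₂
  obtain ⟨hX3, hY3⟩ := mU_inj hZ₃.symm
  subst hX3; subst hY3
  refine ⟨γs, γs', γ, ?_, ?_⟩
  · exact trace_append (trace_append hNt1 ⟨X₂, hN2, rfl⟩) hNt3
  · exact trace_append (trace_append hMt1 ⟨Y₂, hM2, rfl⟩) hMt3
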